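/- arXiv:1809.03771 — 2 statements merged into one kernel-verified Lean document; each statement's English description precedes it below -/
import Mathlib

section
/- Let J be a nonempty closed convex subset of a uniformly convex Banach space G and S : J → J a nonexpansive mapping whose fixed point set F(S) is nonempty. Let {δₙ} satisfy 0 < w ≤ δₙ ≤ v < 1 for some constants w, v, and let {cₙ} be generated by the iteration (1.2) with aₙ = S cₙ and bₙ = (1−δₙ)aₙ + δₙ S aₙ. Then lim_{n→∞} ‖aₙ − bₙ‖ = 0. -/
/-!
Fix q ∈ F(S). Nonexpansiveness gives ‖aₙ - q‖, ‖S aₙ - q‖ ≤ ‖cₙ - q‖ and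
‖cₙ₊₁ - q‖ ≤ ‖bₙ - q‖, so ‖cₙ - q‖ decreases to a limit and the decrements
‖cₙ - q‖ - ‖cₙ₊₁ - q‖ tend to 0. If ‖aₙ - S aₙ‖ ≥ ε, uniform convexity makes the convex
combination bₙ - q = (1 - δₙ)(aₙ - q) + δₙ(S aₙ - q) shorter than ‖cₙ - q‖ by a fixed amount
(δₙ stays away from 0 and 1, and ‖cₙ - q‖ is bounded), which can happen only finitely often.
Finally aₙ - bₙ = δₙ (aₙ - S aₙ).
-/

open Filter Topology

section ConvexCombination

variable {E : Type*} [SeminormedAddCommGroup E] [NormedSpace ℝ E]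

theorem norm_one_sub_smul_add_smul_le {x y : E} {R η t : ℝ} (hx : ‖x‖ ≤ R) (hy : ‖y‖ ≤ R)
    (hxy : ‖x + y‖ ≤ 2 * R - η) (ht₀ : 0 ≤ t) (ht₁ : t ≤ 1) :
    ‖(1 - t) • x + t • y‖ ≤ R - min t (1 - t) * η := by
  rcases le_total t (1 / 2) with ht | ht
  · calc ‖(1 - t) • x + t • y‖ = ‖(1 - 2 * t) • x + t • (x + y)‖ := by congr 1; module
      _ ≤ (1 - 2 * t) * R + t * (2 * R - η) := by
        refine (norm_add_le _ _).trans ?_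
        rw [norm_smul_of_nonneg (by linarith), norm_smul_of_nonneg ht₀]
        gcongr; linarith
      _ ≤ R - min t (1 - t) * η := by
        rw [min_eq_left (by linarith)]; linarith
  · calc ‖(1 - t) • x + t • y‖ = ‖(2 * t - 1) • y + (1 - t) • (x + y)‖ := by congr 1; module
      _ ≤ (2 * t - 1) * R + (1 - t) * (2 * R - η) := by
        refine (norm_add_le _ _).trans ?_
        rw [norm_smul_of_nonneg (by linarith), norm_smul_of_nonneg (by linarith)]
        gcongr; linarith
      _ ≤ R - min t (1 - t) * η := by
        rw [min_eq_right (by linarith)]; linarith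

theorem norm_one_sub_smul_add_smul_le_of_norm_le {x y : E} {R t : ℝ} (hx : ‖x‖ ≤ R)
    (hy : ‖y‖ ≤ R) (ht₀ : 0 ≤ t) (ht₁ : t ≤ 1) : ‖(1 - t) • x + t • y‖ ≤ R := by
  simpa using norm_one_sub_smul_add_smul_le hx hy (η := 0)
    (by linarith [norm_add_le x y]) ht₀ ht₁

end ConvexCombination

section UniformConvex

variable {E : Type*} [SeminormedAddCommGroup E] [NormedSpace ℝ E] [UniformConvexSpace E]

theorem exists_forall_norm_add_le_two_mul_sub_of_le {ε : ℝ} (hε : 0 < ε) (R₀ : ℝ) :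
    ∃ η > 0, ∀ ⦃R : ℝ⦄, R ≤ R₀ → ∀ ⦃x y : E⦄, ‖x‖ ≤ R → ‖y‖ ≤ R → ε ≤ ‖x - y‖ →
      ‖x + y‖ ≤ 2 * R - η := by
  rcases le_or_gt R₀ 0 with hR₀ | hR₀
  · refine ⟨1, one_pos, fun R hR x y hx hy hxy => absurd hxy (not_le.2 ?_)⟩
    linarith [norm_sub_le x y]
  obtain ⟨δ, hδ, hunit⟩ := exists_forall_closed_ball_dist_add_le_two_sub E (div_pos hε hR₀)
  -- Rescaling to the unit ball yields the gap `R * δ`, and `R ≥ ε / 2`.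
  refine ⟨δ * ε / 2, by positivity, fun R hR x y hx hy hxy => ?_⟩
  have hR2 : ε ≤ 2 * R := by linarith [norm_sub_le x y]
  have hRpos : 0 < R := by linarith
  have hscale : ∀ z : E, ‖R⁻¹ • z‖ = ‖z‖ / R := fun z => by
    rw [norm_smul_of_nonneg (inv_nonneg.2 hRpos.le), inv_mul_eq_div]
  have hsum := hunit (x := R⁻¹ • x) (y := R⁻¹ • y)
    (by rw [hscale, div_le_one hRpos]; exact hx) (by rw [hscale, div_le_one hRpos]; exact hy)
    (by rw [← smul_sub, hscale, le_div_iff₀ hRpos]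
        calc ε / R₀ * R ≤ ε := by rw [div_mul_eq_mul_div, div_le_iff₀ hR₀]; gcongr
          _ ≤ ‖x - y‖ := hxy)
  rw [← smul_add, hscale, div_le_iff₀ hRpos] at hsum
  nlinarith

theorem tendsto_norm_sub_of_le_norm_one_sub_smul_add_smul {x y : ℕ → E} {r t : ℕ → ℝ}
    {w v : ℝ} (hw : 0 < w) (hv : v < 1) (ht : ∀ n, w ≤ t n ∧ t n ≤ v)
    (hx : ∀ n, ‖x n‖ ≤ r n) (hy : ∀ n, ‖y n‖ ≤ r n)
    (hr : ∀ n, r (n + 1) ≤ ‖(1 - t n) • x n + t n • y n‖) :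
    Tendsto (fun n => ‖x n - y n‖) atTop (𝓝 0) := by
  have ht₀ : ∀ n, 0 ≤ t n := fun n => hw.le.trans (ht n).1
  have ht₁ : ∀ n, t n ≤ 1 := fun n => (ht n).2.trans hv.le
  have hanti : Antitone r := antitone_nat_of_succ_le fun n =>
    (hr n).trans (norm_one_sub_smul_add_smul_le_of_norm_le (hx n) (hy n) (ht₀ n) (ht₁ n))
  have hlim := tendsto_atTop_ciInf hanti
    ⟨0, by rintro _ ⟨n, rfl⟩; exact (norm_nonneg _).trans (hx n)⟩
  have hstep : Tendsto (fun n => r n - r (n + 1)) atTop (𝓝 0) := by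
    simpa using hlim.sub (hlim.comp (tendsto_add_atTop_nat 1))
  rw [← tendsto_zero_iff_norm_tendsto_zero, NormedAddGroup.tendsto_nhds_zero]
  intro ε hε
  obtain ⟨η, hη, hgap⟩ := exists_forall_norm_add_le_two_mul_sub_of_le (E := E) hε (r 0)
  have hμ : 0 < min w (1 - v) * η := mul_pos (lt_min hw (by linarith)) hη
  filter_upwards [hstep.eventually (gt_mem_nhds hμ)] with n hn
  by_contra! hεn
  have hcombo := norm_one_sub_smul_add_smul_le (hx n) (hy n)
    (hgap (hanti (Nat.zero_le n)) (hx n) (hy n) hεn) (ht₀ n) (ht₁ n)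
  have hmin : min w (1 - v) ≤ min (t n) (1 - t n) :=
    min_le_min (ht n).1 (by linarith [(ht n).2])
  nlinarith [hr n]

end UniformConvex

theorem stmt_6_general {G : Type*} [NormedAddCommGroup G] [NormedSpace ℝ G]
    [UniformConvexSpace G]
    (J : Set G) (hJconv : Convex ℝ J)
    (S : G → G) (hSJ : ∀ x ∈ J, S x ∈ J)
    (hS : ∀ u ∈ J, ∀ v ∈ J, ‖S u - S v‖ ≤ ‖u - v‖)
    (hFne : ∃ q ∈ J, S q = q)
    (δ : ℕ → ℝ) (w v : ℝ) (hw : 0 < w) (hv : v < 1)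
    (hδ : ∀ n, w ≤ δ n ∧ δ n ≤ v)
    (a b c : ℕ → G) (hc1 : c 1 ∈ J)
    (ha : ∀ n, 1 ≤ n → a n = S (c n))
    (hb : ∀ n, 1 ≤ n → b n = (1 - δ n) • a n + δ n • S (a n))
    (hc : ∀ n, 1 ≤ n → c (n + 1) = S (b n)) :
    Tendsto (fun n => ‖a n - b n‖) atTop (nhds 0) := by
  obtain ⟨q, hqJ, hq⟩ := hFne
  have hδ₀ : ∀ n, 0 ≤ δ n := fun n => hw.le.trans (hδ n).1
  have hδ₁ : ∀ n, 0 ≤ 1 - δ n := fun n => by linarith [(hδ n).2]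
  have hSq : ∀ x ∈ J, ‖S x - q‖ ≤ ‖x - q‖ := fun x hx => by simpa [hq] using hS x hx q hqJ
  have hbJ : ∀ n, 1 ≤ n → a n ∈ J → b n ∈ J := fun n hn haJ => by
    rw [hb n hn]; exact hJconv haJ (hSJ _ haJ) (hδ₁ n) (hδ₀ n) (by ring)
  have hcJ : ∀ n, 1 ≤ n → c n ∈ J := Nat.le_induction hc1 fun n hn hcn => by
    rw [hc n hn]; exact hSJ _ (hbJ n hn (ha n hn ▸ hSJ _ hcn))
  have haJ : ∀ n, 1 ≤ n → a n ∈ J := fun n hn => ha n hn ▸ hSJ _ (hcJ n hn)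
  have haq : ∀ n, 1 ≤ n → ‖a n - q‖ ≤ ‖c n - q‖ := fun n hn =>
    ha n hn ▸ hSq _ (hcJ n hn)
  have hcb : ∀ n, ‖c (n + 1 + 1) - q‖ ≤
      ‖(1 - δ (n + 1)) • (a (n + 1) - q) + δ (n + 1) • (S (a (n + 1)) - q)‖ := fun n => by
    have hbq : b (n + 1) - q =
        (1 - δ (n + 1)) • (a (n + 1) - q) + δ (n + 1) • (S (a (n + 1)) - q) := by
      rw [hb _ le_add_self]; module
    rw [hc _ le_add_self, ← hbq]
    exact hSq _ (hbJ _ le_add_self (haJ _ le_add_self))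
  have hasymp : Tendsto (fun n => ‖a (n + 1) - S (a (n + 1))‖) atTop (𝓝 0) := by
    simpa using tendsto_norm_sub_of_le_norm_one_sub_smul_add_smul
      (r := fun n => ‖c (n + 1) - q‖) hw hv (fun n => hδ (n + 1)) (fun n => haq _ le_add_self)
      (fun n => (hSq _ (haJ _ le_add_self)).trans (haq _ le_add_self)) hcb
  rw [← tendsto_add_atTop_iff_nat 1]
  refine squeeze_zero (fun _ => norm_nonneg _) (fun n => ?_) hasymp
  have hab : a (n + 1) - b (n + 1) = δ (n + 1) • (a (n + 1) - S (a (n + 1))) := by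
    rw [hb _ le_add_self]; module
  rw [hab, norm_smul_of_nonneg (hδ₀ _)]
  exact mul_le_of_le_one_left (norm_nonneg _) ((hδ _).2.trans hv.le)

/-- for the iteration (1.2), ‖aₙ - bₙ‖ → 0. -/
theorem stmt_6 {G : Type*} [NormedAddCommGroup G] [NormedSpace ℝ G] [CompleteSpace G]
    [UniformConvexSpace G]
    (J : Set G) (hJne : J.Nonempty) (hJcl : IsClosed J) (hJconv : Convex ℝ J)
    (S : G → G) (hSJ : ∀ x ∈ J, S x ∈ J)
    (hS : ∀ u ∈ J, ∀ v ∈ J, ‖S u - S v‖ ≤ ‖u - v‖)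
    (hFne : ∃ q ∈ J, S q = q)
    (δ : ℕ → ℝ) (w v : ℝ) (hw : 0 < w) (hv : v < 1)
    (hδ : ∀ n, w ≤ δ n ∧ δ n ≤ v)
    (a b c : ℕ → G) (hc1 : c 1 ∈ J)
    (ha : ∀ n, 1 ≤ n → a n = S (c n))
    (hb : ∀ n, 1 ≤ n → b n = (1 - δ n) • a n + δ n • S (a n))
    (hc : ∀ n, 1 ≤ n → c (n + 1) = S (b n)) :
    Tendsto (fun n => ‖a n - b n‖) atTop (nhds 0) :=
  stmt_6_general J hJconv S hSJ hS hFne δ w v hw hv hδ a b c hc1 ha hb hc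
end

section
/- Let J be a nonempty closed convex subset of a Banach space G and S : J → J a nonexpansive mapping whose fixed point set F(S) is nonempty. Let {cₙ} be generated by the iteration (1.2). If liminf_{n→∞} d(cₙ, F(S)) = 0, where d(x, F(S)) = inf{‖x − q‖ : q ∈ F(S)}, then {cₙ} is a Cauchy sequence. -/
/-!
Each step of the iteration is a composition of `S` with a convex combination of points no farther
from a fixed point `q` than the current iterate, so `n ↦ ‖cₙ - q‖` is nonincreasing for every
`q ∈ F(S)` (Fejér monotonicity). Hence once `d(c_N, F(S)) < ε / 2`, witnessed by some `q`, all later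
iterates stay in the ball of radius `ε / 2` about `q`.
-/

open Filter

section FejerMonotone

variable {X : Type*} [PseudoMetricSpace X]

theorem exists_ge_infDist_lt_of_liminf_eq_zero {u : ℕ → X} {F : Set X} {N₀ : ℕ} {q₀ : X}
    (hq₀ : q₀ ∈ F) (hmono : AntitoneOn (fun n => dist (u n) q₀) (Set.Ici N₀))
    (hliminf : liminf (fun n => Metric.infDist (u n) F) atTop = 0) {ε : ℝ} (hε : 0 < ε) :
    ∃ N ≥ N₀, Metric.infDist (u N) F < ε := by
  have hbdd : IsBoundedUnder (· ≤ ·) atTop (fun n => Metric.infDist (u n) F) := by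
    refine ⟨dist (u N₀) q₀, eventually_map.mpr ?_⟩
    filter_upwards [eventually_ge_atTop N₀] with n hn
    exact (Metric.infDist_le_dist_of_mem hq₀).trans (hmono Set.self_mem_Ici hn hn)
  have hfreq := frequently_lt_of_liminf_lt hbdd.isCoboundedUnder_ge (hliminf.trans_lt hε)
  exact (hfreq.and_eventually (eventually_ge_atTop N₀)).exists.imp fun N h => ⟨h.2, h.1⟩

theorem cauchySeq_of_antitoneOn_dist_of_liminf_infDist_eq_zero {u : ℕ → X} {F : Set X}
    (hF : F.Nonempty) {N₀ : ℕ}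
    (hmono : ∀ q ∈ F, AntitoneOn (fun n => dist (u n) q) (Set.Ici N₀))
    (hliminf : liminf (fun n => Metric.infDist (u n) F) atTop = 0) :
    CauchySeq u := by
  obtain ⟨q₀, hq₀⟩ := hF
  refine Metric.cauchySeq_iff'.mpr fun ε hε => ?_
  obtain ⟨N, hN, hNF⟩ :=
    exists_ge_infDist_lt_of_liminf_eq_zero hq₀ (hmono q₀ hq₀) hliminf (half_pos hε)
  obtain ⟨q, hq, hNq⟩ := (Metric.infDist_lt_iff ⟨q₀, hq₀⟩).mp hNF
  refine ⟨N, fun n hn => ?_⟩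
  have hnq : dist (u n) q ≤ dist (u N) q := hmono q hq hN (hN.trans hn) hn
  calc dist (u n) (u N) ≤ dist (u n) q + dist (u N) q := dist_triangle_right _ _ _
    _ < ε := by linarith

end FejerMonotone

theorem dist_apply_le_of_fixed {E : Type*} [SeminormedAddCommGroup E] {J : Set E} {S : E → E}
    (hS : ∀ u ∈ J, ∀ v ∈ J, ‖S u - S v‖ ≤ ‖u - v‖)
    {x q : E} (hx : x ∈ J) (hqJ : q ∈ J) (hqS : S q = q) : dist (S x) q ≤ dist x q := by
  simpa only [dist_eq_norm, hqS] using hS x hx q hqJ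

section Iteration

variable {E : Type*} [NormedAddCommGroup E] [NormedSpace ℝ E] {J : Set E} {S : E → E}

def iterationStep (S : E → E) (t : ℝ) (x : E) : E :=
  S ((1 - t) • S x + t • S (S x))

theorem iterationStep_mem (hJconv : Convex ℝ J) (hSJ : ∀ x ∈ J, S x ∈ J)
    {t : ℝ} (ht : t ∈ Set.Icc (0 : ℝ) 1) {x : E} (hx : x ∈ J) : iterationStep S t x ∈ J :=
  hSJ _ <| hJconv (hSJ _ hx) (hSJ _ (hSJ _ hx)) (sub_nonneg.mpr ht.2) ht.1 (by ring)

theorem dist_iterationStep_le (hJconv : Convex ℝ J) (hSJ : ∀ x ∈ J, S x ∈ J)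
    (hS : ∀ u ∈ J, ∀ v ∈ J, ‖S u - S v‖ ≤ ‖u - v‖)
    {t : ℝ} (ht : t ∈ Set.Icc (0 : ℝ) 1) {x q : E} (hx : x ∈ J) (hqJ : q ∈ J) (hqS : S q = q) :
    dist (iterationStep S t x) q ≤ dist x q := by
  set y := (1 - t) • S x + t • S (S x)
  have hSx : S x ∈ J := hSJ x hx
  have hy : y ∈ J := hJconv hSx (hSJ _ hSx) (sub_nonneg.mpr ht.2) ht.1 (by ring)
  have hSSx : dist (S (S x)) q ≤ dist (S x) q := dist_apply_le_of_fixed hS hSx hqJ hqS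
  have hy_ball : y ∈ Metric.closedBall q (dist (S x) q) :=
    convex_closedBall q _ (Metric.mem_closedBall.mpr le_rfl) (Metric.mem_closedBall.mpr hSSx)
      (sub_nonneg.mpr ht.2) ht.1 (by ring)
  calc dist (iterationStep S t x) q ≤ dist y q := dist_apply_le_of_fixed hS hy hqJ hqS
    _ ≤ dist (S x) q := Metric.mem_closedBall.mp hy_ball
    _ ≤ dist x q := dist_apply_le_of_fixed hS hx hqJ hqS

end Iteration

theorem stmt_9_general {G : Type*} [NormedAddCommGroup G] [NormedSpace ℝ G]
    (J : Set G) (hJconv : Convex ℝ J)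
    (S : G → G) (hSJ : ∀ x ∈ J, S x ∈ J)
    (hS : ∀ u ∈ J, ∀ v ∈ J, ‖S u - S v‖ ≤ ‖u - v‖)
    (hFne : ∃ q ∈ J, S q = q)
    (δ : ℕ → ℝ) (hδ : ∀ n, δ n ∈ Set.Ioo (0 : ℝ) 1)
    (a b c : ℕ → G) (hc1 : c 1 ∈ J)
    (ha : ∀ n, 1 ≤ n → a n = S (c n))
    (hb : ∀ n, 1 ≤ n → b n = (1 - δ n) • a n + δ n • S (a n))
    (hc : ∀ n, 1 ≤ n → c (n + 1) = S (b n))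
    (hliminf : liminf (fun n => Metric.infDist (c n) {q | q ∈ J ∧ S q = q}) atTop = 0) :
    CauchySeq c := by
  have hδ' : ∀ n, δ n ∈ Set.Icc (0 : ℝ) 1 := fun n => Set.Ioo_subset_Icc_self (hδ n)
  have hstep : ∀ n ≥ 1, c (n + 1) = iterationStep S (δ n) (c n) := fun n hn => by
    rw [hc n hn, hb n hn, ha n hn, iterationStep]
  have hcJ : ∀ n ≥ 1, c n ∈ J := fun n hn => by
    induction n, hn using Nat.le_induction with
    | base => exact hc1
    | succ n hn ih => exact hstep n hn ▸ iterationStep_mem hJconv hSJ (hδ' n) ih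
  refine cauchySeq_of_antitoneOn_dist_of_liminf_infDist_eq_zero hFne (N₀ := 1)
    (fun q hq => antitoneOn_nat_Ici_of_succ_le fun n hn => ?_) hliminf
  exact hstep n hn ▸ dist_iterationStep_le hJconv hSJ hS (hδ' n) (hcJ n hn) hq.1 hq.2

/-- if `liminf d(cₙ, F(S)) = 0`, then the iteration (1.2) is Cauchy. -/
theorem stmt_9 {G : Type*} [NormedAddCommGroup G] [NormedSpace ℝ G] [CompleteSpace G]
    (J : Set G) (hJne : J.Nonempty) (hJcl : IsClosed J) (hJconv : Convex ℝ J)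
    (S : G → G) (hSJ : ∀ x ∈ J, S x ∈ J)
    (hS : ∀ u ∈ J, ∀ v ∈ J, ‖S u - S v‖ ≤ ‖u - v‖)
    (hFne : ∃ q ∈ J, S q = q)
    (δ : ℕ → ℝ) (hδ : ∀ n, δ n ∈ Set.Ioo (0 : ℝ) 1)
    (a b c : ℕ → G) (hc1 : c 1 ∈ J)
    (ha : ∀ n, 1 ≤ n → a n = S (c n))
    (hb : ∀ n, 1 ≤ n → b n = (1 - δ n) • a n + δ n • S (a n))
    (hc : ∀ n, 1 ≤ n → c (n + 1) = S (b n))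
    (hliminf : liminf (fun n => Metric.infDist (c n) {q | q ∈ J ∧ S q = q}) atTop = 0) :
    CauchySeq c :=
  stmt_9_general J hJconv S hSJ hS hFne δ hδ a b c hc1 ha hb hc hliminf
end
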